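/- arXiv:1201.2323 — 2 statements merged into one kernel-verified Lean document; each statement's English description precedes it below -/
import Mathlib

section
/- Let p and q be positive real numbers. Then the double inequality exp(p·((a-b)/(a+b))²) < A(a,b)/I(a,b) < exp(q·((a-b)/(a+b))²) holds for every pair of positive real numbers a > b if and only if p ≤ 1/6 and q ≥ ln(e/2). -/
noncomputable def A (a b : ℝ) : ℝ := (a + b) / 2

noncomputable def G (a b : ℝ) : ℝ := Real.sqrt (a * b)

noncomputable def H (a b : ℝ) : ℝ := 2 * a * b / (a + b)

noncomputable def I (a b : ℝ) : ℝ :=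
  (1 / Real.exp 1) * (a ^ a / b ^ b) ^ (1 / (a - b))

noncomputable def Q (t s a b : ℝ) : ℝ :=
  G (t * a + (1 - t) * b) (t * b + (1 - t) * a) ^ s * A a b ^ (1 - s)

noncomputable def f (u s x : ℝ) : ℝ :=
  1 - (1 / (2 * x)) * Real.log ((1 + x) / (1 - x))
    - (1 / 2) * Real.log (1 - x ^ 2) + (s / 2) * Real.log (1 - u * x ^ 2)

noncomputable def h (u s x : ℝ) : ℝ :=
  -x + (1 / 2) * Real.log ((1 + x) / (1 - x)) - s * u * x ^ 3 / (1 - u * x ^ 2)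

/-!
With `x = (a - b)/(a + b) ∈ (0, 1)` one has `log (A/I) = x² φ(x)`, where
`φ(x) = Σₙ x²ⁿ / ((2n+2)(2n+3))` comes from the series of `log (1 ± x)`. All coefficients are
positive, so `φ` is strictly increasing on `(0, 1)`, from `φ(0⁺) = 1/6` to `φ(1⁻) = 1 - log 2`
(the latter read off the closed form), and `1 - log 2 = log (e/2)`.
-/

open Real Filter Topology Set

theorem StrictMonoOn.forall_mem_Ioo_lt_and_lt_iff {α β : Type*} [LinearOrder α]
    [TopologicalSpace α] [OrderTopology α] [DenselyOrdered α] [LinearOrder β]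
    [TopologicalSpace β] [OrderClosedTopology β] {f : α → β} {a b : α} {l u p q : β}
    (hab : a < b) (hf : StrictMonoOn f (Ioo a b)) (hl : Tendsto f (𝓝[>] a) (𝓝 l))
    (hu : Tendsto f (𝓝[<] b) (𝓝 u)) :
    (∀ x ∈ Ioo a b, p < f x ∧ f x < q) ↔ p ≤ l ∧ u ≤ q := by
  have := nhdsGT_neBot_of_exists_gt ⟨b, hab⟩
  have := nhdsLT_neBot_of_exists_lt ⟨a, hab⟩
  constructor
  · intro h
    exact ⟨ge_of_tendsto hl (eventually_of_mem (Ioo_mem_nhdsGT hab) fun x hx ↦ (h x hx).1.le),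
      le_of_tendsto hu (eventually_of_mem (Ioo_mem_nhdsLT hab) fun x hx ↦ (h x hx).2.le)⟩
  · rintro ⟨hpl, huq⟩ x hx
    obtain ⟨y, hay, hyx⟩ := exists_between hx.1
    obtain ⟨z, hxz, hzb⟩ := exists_between hx.2
    have hy : y ∈ Ioo a b := ⟨hay, hyx.trans hx.2⟩
    have hz : z ∈ Ioo a b := ⟨hx.1.trans hxz, hzb⟩
    have hly : l ≤ f y := le_of_tendsto hl <| eventually_of_mem (Ioo_mem_nhdsGT hay)
      fun w hw ↦ (hf ⟨hw.1, hw.2.trans hy.2⟩ hy hw.2).le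
    have hzu : f z ≤ u := ge_of_tendsto hu <| eventually_of_mem (Ioo_mem_nhdsLT hzb)
      fun w hw ↦ (hf hz ⟨hz.1.trans hw.1, hw.2⟩ hw.1).le
    exact ⟨hpl.trans_lt (hly.trans_lt (hf hy hx hyx)), (hf hx hz hxz).trans_le (hzu.trans huq)⟩

theorem forall_pos_lt_iff_forall_mem_Ioo_sub_div_add {P : ℝ → Prop} :
    (∀ a b : ℝ, 0 < b → b < a → P ((a - b) / (a + b))) ↔ ∀ x ∈ Ioo (0 : ℝ) 1, P x := by
  refine ⟨fun h x hx ↦ ?_, fun h a b hb hab ↦ h _ ⟨?_, ?_⟩⟩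
  · convert h (1 + x) (1 - x) (by linarith [hx.2]) (by linarith [hx.1]) using 1
    ring
  · exact div_pos (by linarith) (by linarith)
  · exact (div_lt_one (by linarith)).2 (by linarith)

noncomputable def logAdivI (x : ℝ) : ℝ :=
  1 - (1 / (2 * x)) * log ((1 + x) / (1 - x)) - (1 / 2) * log (1 - x ^ 2)

theorem log_I {a b : ℝ} (hb : 0 < b) (hab : b < a) :
    log (I a b) = (a * log a - b * log b) / (a - b) - 1 := by
  have ha : 0 < a := hb.trans hab
  rw [I, one_div (exp 1), log_mul (by positivity) (by positivity), log_inv, log_exp,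
    log_rpow (by positivity), log_div (by positivity) (by positivity), log_rpow ha, log_rpow hb]
  field_simp
  ring

theorem logAdivI_eq {x : ℝ} (hx0 : 0 < x) (hx1 : x < 1) :
    logAdivI x = 1 - ((1 + x) * log (1 + x) - (1 - x) * log (1 - x)) / (2 * x) := by
  rw [logAdivI, log_div (by linarith) (by linarith), show 1 - x ^ 2 = (1 - x) * (1 + x) by ring,
    log_mul (by linarith) (by linarith)]
  field_simp
  ring

theorem A_div_I_eq_exp_logAdivI {a b : ℝ} (hb : 0 < b) (hab : b < a) :
    A a b / I a b = exp (logAdivI ((a - b) / (a + b))) := by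
  have ha : 0 < a := hb.trans hab
  have hs : 0 < a + b := by linarith
  have hd : a - b ≠ 0 := by linarith
  have hA : 0 < A a b := by unfold A; positivity
  have hI : 0 < I a b := by unfold I; positivity
  have hplus : 1 + (a - b) / (a + b) = 2 * a / (a + b) := by field_simp; ring
  have hminus : 1 - (a - b) / (a + b) = 2 * b / (a + b) := by field_simp; ring
  rw [← exp_log (div_pos hA hI), log_div hA.ne' hI.ne', log_I hb hab,
    logAdivI_eq (div_pos (by linarith) hs) ((div_lt_one hs).2 (by linarith)), hplus, hminus, A,
    log_div hs.ne' two_ne_zero, log_div (by positivity) hs.ne', log_div (by positivity) hs.ne',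
    log_mul two_ne_zero ha.ne', log_mul two_ne_zero hb.ne']
  congr 1
  field_simp
  ring

noncomputable def logAdivICoeff (n : ℕ) : ℝ := 1 / ((2 * n + 2) * (2 * n + 3))

theorem logAdivICoeff_pos (n : ℕ) : 0 < logAdivICoeff n := by
  unfold logAdivICoeff; positivity

theorem hasSum_logAdivI_div_sq {x : ℝ} (hx0 : 0 < x) (hx1 : x < 1) :
    HasSum (fun n : ℕ ↦ logAdivICoeff n * (x ^ 2) ^ n) (logAdivI x / x ^ 2) := by
  have hx : |x| < 1 := by rwa [abs_of_pos hx0]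
  have hx2 : |x ^ 2| < 1 := by rw [abs_of_nonneg (sq_nonneg x)]; nlinarith
  have hlog1 := (hasSum_pow_div_log_of_abs_lt_one hx2).div_const (2 * x ^ 2)
  have hlog2 := ((hasSum_nat_add_iff' 1).2 (hasSum_log_sub_log_of_abs_lt_one hx)).div_const
    (2 * x ^ 3)
  convert! hlog1.sub hlog2 using 1
  · funext n
    unfold logAdivICoeff
    push_cast
    field_simp
    ring
  · unfold logAdivI
    rw [log_div (by linarith) (by linarith), Finset.sum_range_one]
    field_simp
    ring

theorem strictMonoOn_logAdivI_div_sq : StrictMonoOn (fun x ↦ logAdivI x / x ^ 2) (Ioo 0 1) := by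
  rintro x hx y hy hxy
  refine hasSum_lt (i := 1) (fun n ↦ ?_) ?_ (hasSum_logAdivI_div_sq hx.1 hx.2)
    (hasSum_logAdivI_div_sq hy.1 hy.2)
  · exact mul_le_mul_of_nonneg_left (pow_le_pow_left₀ (by positivity)
      (pow_le_pow_left₀ hx.1.le hxy.le 2) n) (logAdivICoeff_pos n).le
  · simp only [pow_one]
    exact mul_lt_mul_of_pos_left (pow_lt_pow_left₀ hxy hx.1.le two_ne_zero) (logAdivICoeff_pos 1)

theorem tendsto_logAdivI_div_sq_nhdsGT_zero :
    Tendsto (fun x ↦ logAdivI x / x ^ 2) (𝓝[>] 0) (𝓝 (1 / 6)) := by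
  have h := tendsto_tsum_of_dominated_convergence (𝓕 := 𝓝[>] (0 : ℝ))
    (f := fun x n ↦ logAdivICoeff n * (x ^ 2) ^ n) (bound := fun n ↦ (1 / 4 : ℝ) ^ n)
    (summable_geometric_of_lt_one (by norm_num) (by norm_num))
    (fun n ↦ ((by fun_prop : Continuous fun x : ℝ ↦ logAdivICoeff n * (x ^ 2) ^ n).tendsto
      0).mono_left nhdsWithin_le_nhds)
    (eventually_of_mem (Ioo_mem_nhdsGT (by norm_num : (0 : ℝ) < 1 / 2)) fun x hx n ↦ ?_)
  · rw [tsum_eq_single 0 fun n hn ↦ by simp [hn],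
      show logAdivICoeff 0 * ((0 : ℝ) ^ 2) ^ 0 = 1 / 6 by norm_num [logAdivICoeff]] at h
    exact h.congr' (eventually_of_mem (Ioo_mem_nhdsGT one_pos) fun x hx ↦
      (hasSum_logAdivI_div_sq hx.1 hx.2).tsum_eq)
  · have hc : logAdivICoeff n ≤ 1 := by
      unfold logAdivICoeff
      exact div_le_one_of_le₀ (by nlinarith [(n.cast_nonneg : (0 : ℝ) ≤ n)]) (by positivity)
    rw [norm_of_nonneg (mul_nonneg (logAdivICoeff_pos n).le (by positivity)),
      ← one_mul ((1 / 4 : ℝ) ^ n)]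
    exact mul_le_mul hc (pow_le_pow_left₀ (by positivity) (by nlinarith [hx.1, hx.2]) n)
      (by positivity) zero_le_one

theorem tendsto_logAdivI_div_sq_nhdsLT_one :
    Tendsto (fun x ↦ logAdivI x / x ^ 2) (𝓝[<] 1) (𝓝 (1 - log 2)) := by
  have hcont : ContinuousAt
      (fun x ↦ (1 - ((1 + x) * log (1 + x) - (1 - x) * log (1 - x)) / (2 * x)) / x ^ 2) 1 := by
    fun_prop (disch := norm_num)
  have hval : (1 - ((1 + 1) * log (1 + 1) - (1 - 1) * log (1 - 1)) / (2 * 1)) / (1 : ℝ) ^ 2 =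
      1 - log 2 := by norm_num
  rw [← hval]
  exact (hcont.tendsto.mono_left nhdsWithin_le_nhds).congr'
    (eventually_of_mem (Ioo_mem_nhdsLT one_pos) fun x hx ↦ by simp only [logAdivI_eq hx.1 hx.2])

theorem stmt_12_general (p q : ℝ) :
    (∀ a b : ℝ, 0 < b → b < a →
        Real.exp (p * ((a - b)/(a + b))^2) < A a b / I a b ∧
          A a b / I a b < Real.exp (q * ((a - b)/(a + b))^2)) ↔
      p ≤ 1/6 ∧ Real.log (Real.exp 1 / 2) ≤ q := by
  rw [log_div (exp_ne_zero 1) two_ne_zero, log_exp,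
    ← strictMonoOn_logAdivI_div_sq.forall_mem_Ioo_lt_and_lt_iff zero_lt_one
      tendsto_logAdivI_div_sq_nhdsGT_zero tendsto_logAdivI_div_sq_nhdsLT_one,
    ← forall_pos_lt_iff_forall_mem_Ioo_sub_div_add]
  refine forall₂_congr fun a b ↦ forall₂_congr fun hb hab ↦ ?_
  have hx : 0 < ((a - b) / (a + b)) ^ 2 := by
    have : 0 < (a - b) / (a + b) := div_pos (by linarith) (by linarith)
    positivity
  rw [A_div_I_eq_exp_logAdivI hb hab, exp_lt_exp, exp_lt_exp, lt_div_iff₀ hx, div_lt_iff₀ hx]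

theorem stmt_12 (p q : ℝ) (hp : 0 < p) (hq : 0 < q) :
    (∀ a b : ℝ, 0 < b → b < a →
        Real.exp (p * ((a - b)/(a + b))^2) < A a b / I a b ∧
          A a b / I a b < Real.exp (q * ((a - b)/(a + b))^2)) ↔
      p ≤ 1/6 ∧ Real.log (Real.exp 1 / 2) ≤ q :=
  stmt_12_general p q
end

section
/- Let s ≥ 1 and u ∈ (0,1) with 3·s·u > 1. Then there exists a unique y₀ ∈ (0,1) such that h_{u,s}(y₀) = 0; moreover h_{u,s}(x) < 0 for x ∈ (0, y₀) and h_{u,s}(x) > 0 for x ∈ (y₀, 1), so that f_{u,s} is strictly decreasing on (0, y₀) and strictly increasing on (y₀, 1). -/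
/-!
A direct computation gives `f' = h / x²` and `h'(x) = x² P(x²) / ((1 - x²)(1 - u x²)²)`, where
`P(t) = (1 - u t)² - s u (3 - u t)(1 - t)`. Since `P(0) = 1 - 3su < 0 < (1 - u)² = P(1)`, `P` has a
root `t₀ ∈ (0, 1)`, and because its leading coefficient `u²(1 - s)` is nonpositive it is negative
on `(0, t₀)` and positive on `(t₀, 1)`. So `h`, which vanishes at `0`, decreases on `[0, √t₀]`,
increases on `[√t₀, 1)` and tends to `+∞` at `1`: it has exactly one zero `y₀` in `(0, 1)`,
negative before it and positive after it.
-/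

open Filter Set Topology

lemma exists_zero_of_strictAntiOn_of_strictMonoOn {g : ℝ → ℝ} {a c b : ℝ} (hac : a < c)
    (hcb : c < b) (hcont : ContinuousOn g (Ico a b)) (ha : g a = 0)
    (hanti : StrictAntiOn g (Icc a c)) (hmono : StrictMonoOn g (Ico c b))
    (hpos : ∀ᶠ x in 𝓝[<] b, 0 < g x) :
    ∃ y₀ ∈ Ioo a b, g y₀ = 0 ∧ (∀ x ∈ Ioo a y₀, g x < 0) ∧ (∀ x ∈ Ioo y₀ b, 0 < g x) := by
  have hc : g c < 0 := ha ▸ hanti ⟨le_rfl, hac.le⟩ ⟨hac.le, le_rfl⟩ hac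
  obtain ⟨z, hgz, hcz, hzb⟩ := (hpos.and (Ioo_mem_nhdsLT hcb)).exists
  obtain ⟨y₀, ⟨hcy, hyz⟩, hy₀⟩ :=
    intermediate_value_Ioo hcz.le (hcont.mono (Icc_subset_Ico hac.le hzb)) ⟨hc, hgz⟩
  have hy₀mem : y₀ ∈ Ico c b := ⟨hcy.le, hyz.trans hzb⟩
  refine ⟨y₀, ⟨hac.trans hcy, hy₀mem.2⟩, hy₀, fun x hx ↦ ?_, fun x hx ↦ ?_⟩
  · rcases le_or_gt x c with hxc | hcx
    · exact ha ▸ hanti ⟨le_rfl, hac.le⟩ ⟨hx.1.le, hxc⟩ hx.1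
    · exact hy₀ ▸ hmono ⟨hcx.le, hx.2.trans hy₀mem.2⟩ hy₀mem hx.2
  · exact hy₀ ▸ hmono hy₀mem ⟨hcy.le.trans hx.1.le, hx.2⟩ hx.1

noncomputable def hDerivNum (s u t : ℝ) : ℝ := (1 - u * t) ^ 2 - s * u * (3 - u * t) * (1 - t)

section hDerivNum

variable {s u t t₀ : ℝ}

lemma hDerivNum_mul_one_sub (h₀ : hDerivNum s u t₀ = 0) :
    hDerivNum s u t * (1 - t₀) =
      (t - t₀) * ((1 - u) ^ 2 + u ^ 2 * (s - 1) * (1 - t₀) * (1 - t)) := by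
  unfold hDerivNum at *
  linear_combination (1 - t) * h₀

lemma sq_one_sub_add_mul_pos (hs : 1 ≤ s) (hu : u ≠ 1) (ht₀ : t₀ ≤ 1) (ht : t ≤ 1) :
    0 < (1 - u) ^ 2 + u ^ 2 * (s - 1) * (1 - t₀) * (1 - t) := by
  have := sub_ne_zero.2 hu.symm
  have := sub_nonneg.2 hs
  have := sub_nonneg.2 ht₀
  have := sub_nonneg.2 ht
  positivity

lemma hDerivNum_neg_of_lt (hs : 1 ≤ s) (hu : u ≠ 1) (h₀ : hDerivNum s u t₀ = 0)
    (ht₀ : t₀ < 1) (ht : t < t₀) : hDerivNum s u t < 0 := by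
  have := mul_neg_of_neg_of_pos (sub_neg.2 ht)
    (sq_one_sub_add_mul_pos hs hu ht₀.le (ht.trans ht₀).le)
  rw [← hDerivNum_mul_one_sub h₀] at this
  exact neg_of_mul_neg_left this (sub_pos.2 ht₀).le

lemma hDerivNum_pos_of_gt (hs : 1 ≤ s) (hu : u ≠ 1) (h₀ : hDerivNum s u t₀ = 0)
    (ht₀ : t₀ < t) (ht : t < 1) : 0 < hDerivNum s u t := by
  have := mul_pos (sub_pos.2 ht₀) (sq_one_sub_add_mul_pos hs hu (ht₀.trans ht).le ht.le)
  rw [← hDerivNum_mul_one_sub h₀] at this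
  exact pos_of_mul_pos_left this (sub_pos.2 (ht₀.trans ht)).le

lemma exists_hDerivNum_eq_zero (hu : u < 1) (h3su : 1 < 3 * s * u) :
    ∃ t₀ ∈ Ioo 0 1, hDerivNum s u t₀ = 0 := by
  have hcont : ContinuousOn (hDerivNum s u) (Icc 0 1) := by unfold hDerivNum; fun_prop
  have h0 : hDerivNum s u 0 < 0 := by simp only [hDerivNum]; linarith
  have h1 : 0 < hDerivNum s u 1 := by
    rw [show hDerivNum s u 1 = (1 - u) ^ 2 by unfold hDerivNum; ring]
    exact pow_pos (sub_pos.2 hu) 2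
  exact intermediate_value_Ioo zero_le_one hcont ⟨h0, h1⟩

end hDerivNum

lemma one_sub_mul_sq_pos {u x : ℝ} (hu : u ≤ 1) (hx : x ∈ Ioo (-1 : ℝ) 1) : 0 < 1 - u * x ^ 2 := by
  obtain ⟨hx₁, hx₂⟩ := hx
  nlinarith

lemma hasDerivAt_log_one_add_div_one_sub {x : ℝ} (hx : x ∈ Ioo (-1 : ℝ) 1) :
    HasDerivAt (fun y ↦ Real.log ((1 + y) / (1 - y))) (2 / (1 - x ^ 2)) x := by
  obtain ⟨hx₁, hx₂⟩ := hx
  have h₁ : 0 < 1 + x := by linarith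
  have h₂ : 0 < 1 - x := by linarith
  have := ((((hasDerivAt_id x).const_add 1).div ((hasDerivAt_id x).const_sub 1) h₂.ne').log
    (div_pos h₁ h₂).ne')
  have h₃ : 1 - x ^ 2 ≠ 0 := by nlinarith
  refine this.congr_deriv ?_
  simp only [id, Pi.div_apply]
  field_simp
  ring

lemma hasDerivAt_log_one_sub_mul_sq {c x : ℝ} (hc : 1 - c * x ^ 2 ≠ 0) :
    HasDerivAt (fun y ↦ Real.log (1 - c * y ^ 2)) (-(2 * c * x) / (1 - c * x ^ 2)) x := by
  convert (((hasDerivAt_pow 2 x).const_mul c).const_sub 1).log hc using 1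
  ring

section

variable {s u x : ℝ}

lemma hasDerivAt_h (hu : u ≤ 1) (hx : x ∈ Ioo (-1 : ℝ) 1) :
    HasDerivAt (h u s) (x ^ 2 * hDerivNum s u (x ^ 2) / ((1 - x ^ 2) * (1 - u * x ^ 2) ^ 2)) x := by
  have h₁ : 1 - x ^ 2 ≠ 0 := (show 0 < 1 - x ^ 2 by nlinarith [hx.1, hx.2]).ne'
  have h₂ : 1 - u * x ^ 2 ≠ 0 := (one_sub_mul_sq_pos hu hx).ne'
  have h₂' : 1 - x ^ 2 * u ≠ 0 := by rwa [mul_comm]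
  have := ((hasDerivAt_id x).neg.add
    ((hasDerivAt_log_one_add_div_one_sub hx).const_mul (1 / 2))).sub
    (((hasDerivAt_pow 3 x).const_mul (s * u)).div
      (((hasDerivAt_pow 2 x).const_mul u).const_sub 1) h₂)
  refine this.congr_deriv ?_
  simp only [hDerivNum]
  field_simp
  ring

lemma hasDerivAt_f (hu : u ≤ 1) (hx₀ : x ≠ 0) (hx : x ∈ Ioo (-1 : ℝ) 1) :
    HasDerivAt (f u s) (h u s x / x ^ 2) x := by
  have h₁ : 0 < 1 - x ^ 2 := by nlinarith [hx.1, hx.2]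
  have h₂ := one_sub_mul_sq_pos hu hx
  have hinv : HasDerivAt (fun y ↦ 1 / (2 * y)) (-(1 / (2 * x ^ 2))) x :=
    ((hasDerivAt_const x 1).div ((hasDerivAt_id x).const_mul 2)
      (mul_ne_zero two_ne_zero hx₀)).congr_deriv (by simp only [id]; field_simp; ring)
  have := (((hasDerivAt_const x 1).sub (hinv.mul (hasDerivAt_log_one_add_div_one_sub hx))).sub
    ((hasDerivAt_log_one_sub_mul_sq (c := 1) (by linarith)).const_mul (1 / 2))).add
    ((hasDerivAt_log_one_sub_mul_sq h₂.ne').const_mul (s / 2))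
  have hf : f u s = fun y ↦ 1 - 1 / (2 * y) * Real.log ((1 + y) / (1 - y))
      - 1 / 2 * Real.log (1 - 1 * y ^ 2) + s / 2 * Real.log (1 - u * y ^ 2) := by
    ext y; simp only [f, one_mul]
  rw [hf]
  refine this.congr_deriv ?_
  simp only [h]
  field_simp
  ring

lemma tendsto_h_nhdsLT_one (hu : u < 1) : Tendsto (h u s) (𝓝[<] 1) atTop := by
  have hden : Tendsto (fun x : ℝ ↦ (1 - x)⁻¹) (𝓝[<] 1) atTop := by
    refine tendsto_inv_nhdsGT_zero.comp (tendsto_nhdsWithin_iff.2 ⟨?_, ?_⟩)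
    · simpa using tendsto_nhdsWithin_of_tendsto_nhds ((continuous_sub_left (1 : ℝ)).tendsto 1)
    · filter_upwards [self_mem_nhdsWithin] with x (hx : x < 1) using sub_pos.2 hx
  have hratio : Tendsto (fun x : ℝ ↦ (1 + x) / (1 - x)) (𝓝[<] 1) atTop :=
    (tendsto_nhdsWithin_of_tendsto_nhds ((continuous_const_add (1 : ℝ)).tendsto 1)).pos_mul_atTop
      (by norm_num) hden
  have hrest : Tendsto (fun x : ℝ ↦ -x - s * u * x ^ 3 / (1 - u * x ^ 2)) (𝓝[<] 1)
      (𝓝 (-1 - s * u * 1 ^ 3 / (1 - u * 1 ^ 2))) := by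
    refine tendsto_nhdsWithin_of_tendsto_nhds (ContinuousAt.tendsto ?_)
    have : 1 - u * 1 ^ 2 ≠ 0 := by linarith
    fun_prop (disch := assumption)
  refine (((Real.tendsto_log_atTop.comp hratio).const_mul_atTop one_half_pos).atTop_add hrest).congr
    fun x ↦ ?_
  simp only [h, Function.comp_apply]
  ring

lemma strictAntiOn_h (hs : 1 ≤ s) (hu : u < 1) {t₀ : ℝ} (h₀ : hDerivNum s u t₀ = 0) (ht₀ : t₀ < 1) :
    StrictAntiOn (h u s) (Icc 0 √t₀) := by
  have hsqrt : √t₀ < 1 := (Real.sqrt_lt' one_pos).2 (by simpa using ht₀)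
  have hsub : Icc 0 √t₀ ⊆ Ioo (-1) 1 := Icc_subset_Ioo (by norm_num) hsqrt
  refine strictAntiOn_of_hasDerivWithinAt_neg (convex_Icc _ _)
    (fun x hx ↦ (hasDerivAt_h hu.le (hsub hx)).continuousAt.continuousWithinAt)
    (fun x hx ↦ (hasDerivAt_h hu.le (hsub (interior_subset hx))).hasDerivWithinAt) fun x hx ↦ ?_
  rw [interior_Icc] at hx
  have hx' := hsub (Ioo_subset_Icc_self hx)
  have hneg := hDerivNum_neg_of_lt hs hu.ne h₀ ht₀ ((Real.lt_sqrt hx.1.le).1 hx.2)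
  have h₁ : 0 < 1 - x ^ 2 := by nlinarith [hx'.1, hx'.2]
  have h₂ := one_sub_mul_sq_pos hu.le hx'
  exact div_neg_of_neg_of_pos (mul_neg_of_pos_of_neg (pow_pos hx.1 2) hneg) (by positivity)

lemma strictMonoOn_h (hs : 1 ≤ s) (hu : u < 1) {t₀ : ℝ} (h₀ : hDerivNum s u t₀ = 0) :
    StrictMonoOn (h u s) (Ico √t₀ 1) := by
  have hsub : Ico √t₀ 1 ⊆ Ioo (-1) 1 :=
    fun x hx ↦ ⟨by linarith [hx.1, Real.sqrt_nonneg t₀], hx.2⟩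
  refine strictMonoOn_of_hasDerivWithinAt_pos (convex_Ico _ _)
    (fun x hx ↦ (hasDerivAt_h hu.le (hsub hx)).continuousAt.continuousWithinAt)
    (fun x hx ↦ (hasDerivAt_h hu.le (hsub (interior_subset hx))).hasDerivWithinAt) fun x hx ↦ ?_
  rw [interior_Ico] at hx
  have hx' := hsub (Ioo_subset_Ico_self hx)
  have hx₀ : 0 < x := (Real.sqrt_nonneg t₀).trans_lt hx.1
  have h₁ : 0 < 1 - x ^ 2 := by nlinarith [hx'.1, hx'.2]
  have hpos := hDerivNum_pos_of_gt hs hu.ne h₀ ((Real.sqrt_lt' hx₀).1 hx.1) (by linarith)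
  have h₂ := one_sub_mul_sq_pos hu.le hx'
  exact div_pos (mul_pos (pow_pos hx₀ 2) hpos) (by positivity)

lemma strictAntiOn_f_of_h_neg (hu : u ≤ 1) {a b : ℝ} (ha : 0 ≤ a) (hb : b ≤ 1)
    (hneg : ∀ x ∈ Ioo a b, h u s x < 0) : StrictAntiOn (f u s) (Ioo a b) := by
  have hderiv : ∀ x ∈ Ioo a b, HasDerivAt (f u s) (h u s x / x ^ 2) x := fun x hx ↦
    hasDerivAt_f hu (show 0 < x by linarith [hx.1]).ne' ⟨by linarith [hx.1], by linarith [hx.2]⟩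
  refine strictAntiOn_of_hasDerivWithinAt_neg (f' := fun x ↦ h u s x / x ^ 2) (convex_Ioo a b)
    (fun x hx ↦ (hderiv x hx).continuousAt.continuousWithinAt) ?_ ?_ <;> rw [interior_Ioo]
  · exact fun x hx ↦ (hderiv x hx).hasDerivWithinAt
  · exact fun x hx ↦ div_neg_of_neg_of_pos (hneg x hx) (by nlinarith [hx.1])

lemma strictMonoOn_f_of_h_pos (hu : u ≤ 1) {a b : ℝ} (ha : 0 ≤ a) (hb : b ≤ 1)
    (hpos : ∀ x ∈ Ioo a b, 0 < h u s x) : StrictMonoOn (f u s) (Ioo a b) := by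
  have hderiv : ∀ x ∈ Ioo a b, HasDerivAt (f u s) (h u s x / x ^ 2) x := fun x hx ↦
    hasDerivAt_f hu (show 0 < x by linarith [hx.1]).ne' ⟨by linarith [hx.1], by linarith [hx.2]⟩
  refine strictMonoOn_of_hasDerivWithinAt_pos (f' := fun x ↦ h u s x / x ^ 2) (convex_Ioo a b)
    (fun x hx ↦ (hderiv x hx).continuousAt.continuousWithinAt) ?_ ?_ <;> rw [interior_Ioo]
  · exact fun x hx ↦ (hderiv x hx).hasDerivWithinAt
  · exact fun x hx ↦ div_pos (hpos x hx) (by nlinarith [hx.1])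

end

theorem stmt_17 (s u : ℝ) (hs : 1 ≤ s) (hu : u ∈ Set.Ioo (0:ℝ) 1)
    (h3su : 1 < 3 * s * u) :
    ∃ y₀ ∈ Set.Ioo (0:ℝ) 1, h u s y₀ = 0 ∧
      (∀ y ∈ Set.Ioo (0:ℝ) 1, h u s y = 0 → y = y₀) ∧
      (∀ x ∈ Set.Ioo (0:ℝ) y₀, h u s x < 0) ∧
      (∀ x ∈ Set.Ioo y₀ (1:ℝ), 0 < h u s x) ∧
      StrictAntiOn (f u s) (Set.Ioo (0:ℝ) y₀) ∧
      StrictMonoOn (f u s) (Set.Ioo y₀ (1:ℝ)) := by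
  have hu₁ := hu.2
  obtain ⟨t₀, ⟨ht₀, ht₀₁⟩, h₀⟩ := exists_hDerivNum_eq_zero hu₁ h3su
  have hcont : ContinuousOn (h u s) (Ico 0 1) := fun x hx ↦
    (hasDerivAt_h hu₁.le ⟨by linarith [hx.1], hx.2⟩).continuousAt.continuousWithinAt
  obtain ⟨y₀, hy₀, hzero, hneg, hpos⟩ := exists_zero_of_strictAntiOn_of_strictMonoOn
    (Real.sqrt_pos.2 ht₀) ((Real.sqrt_lt' one_pos).2 (by simpa using ht₀₁)) hcont (by simp [h])
    (strictAntiOn_h hs hu₁ h₀ ht₀₁) (strictMonoOn_h hs hu₁ h₀)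
    ((tendsto_h_nhdsLT_one hu₁).eventually_gt_atTop 0)
  refine ⟨y₀, hy₀, hzero, fun y hy hy0 ↦ ?_, hneg, hpos,
    strictAntiOn_f_of_h_neg hu₁.le le_rfl hy₀.2.le hneg,
    strictMonoOn_f_of_h_pos hu₁.le hy₀.1.le le_rfl hpos⟩
  by_contra hne
  rcases lt_or_gt_of_ne hne with hlt | hgt
  · exact (hneg y ⟨hy.1, hlt⟩).ne hy0
  · exact (hpos y ⟨hgt, hy.2⟩).ne' hy0
end
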